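/- For every integer m with kmin < m ≤ kmax, the cut-off profile s with cut-off m miscoordinates on exactly one arrival pair of the subgame T1: the set {(t1, t2) ∈ T1 : s_1(t1) ≠ s_2(t2)} has exactly one element, namely the unique pair in T1 whose two coordinates are m - 1 and m. -/

import Mathlib

/-- The two actions: `c` (canteen) and `o` (office). -/
inductive Act : Type
  | c : Act
  | o : Act
deriving DecidableEq

open Act

/-- The set of arrival pairs
`T = {(k, k+1) : kmin ≤ k ≤ kmax - 1} ∪ {(k, k-1) : kmin + 1 ≤ k ≤ kmax}`. -/
noncomputable def T (kmin kmax : ℤ) : Finset (ℤ × ℤ) :=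
  ((Finset.Icc kmin (kmax - 1)).image (fun k => (k, k + 1))) ∪
  ((Finset.Icc (kmin + 1) kmax).image (fun k => (k, k - 1)))

/-- Subgame `T1 = {(t1,t2) ∈ T : t1 ≡ kmin (mod 2)}`. -/
noncomputable def T1 (kmin kmax : ℤ) : Finset (ℤ × ℤ) :=
  (T kmin kmax).filter (fun t => t.1 % 2 = kmin % 2)

/-- Subgame `T2 = {(t1,t2) ∈ T : t2 ≡ kmin (mod 2)}`. -/
noncomputable def T2 (kmin kmax : ℤ) : Finset (ℤ × ℤ) :=
  (T kmin kmax).filter (fun t => t.2 % 2 = kmin % 2)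

/-- The expected utility of profile `s` over a set `S` of arrival pairs:
`EU_S(s) = (1/|S|) · Σ_{(t1,t2) ∈ S} u_{(t1,t2)}(s_1(t1), s_2(t2))`. -/
noncomputable def EU (u : ℤ × ℤ → Act → Act → ℝ) (s : (ℤ → Act) × (ℤ → Act))
    (S : Finset (ℤ × ℤ)) : ℝ :=
  (∑ t ∈ S, u t (s.1 t.1) (s.2 t.2)) / S.card

/-- `s` is Pareto optimal over `S` if no profile `s'` has `EU_S(s') > EU_S(s)`. -/
def ParetoOptimal (u : ℤ × ℤ → Act → Act → ℝ) (S : Finset (ℤ × ℤ))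
    (s : (ℤ → Act) × (ℤ → Act)) : Prop :=
  ¬ ∃ s' : (ℤ → Act) × (ℤ → Act), EU u s' S > EU u s S

/-- `u` satisfies conditions (U1) and (U2) on the arrival pairs of `T`. -/
def SatisfiesU1U2 (kmin kmax N : ℤ) (u : ℤ × ℤ → Act → Act → ℝ) : Prop :=
  ∀ t ∈ T kmin kmax,
    (t.1 < N ∧ t.2 < N →
      u t c c > u t o o ∧ u t o o > u t c o ∧ u t c o = u t o c) ∧
    (N ≤ t.1 ∨ N ≤ t.2 →
      u t o o > u t c o ∧ u t c o = u t o c ∧ u t o c = u t c c)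

/-- `u` is uniform with values `A > B > C` (the order is assumed separately). -/
def Uniform (kmin kmax N : ℤ) (u : ℤ × ℤ → Act → Act → ℝ) (A B C : ℝ) : Prop :=
  ∀ t ∈ T kmin kmax,
    (t.1 < N ∧ t.2 < N →
      u t c c = A ∧ u t o o = B ∧ u t c o = C ∧ u t o c = C) ∧
    (N ≤ t.1 ∨ N ≤ t.2 →
      u t o o = B ∧ u t c c = C ∧ u t c o = C ∧ u t o c = C)

/-- The cut-off strategy with cut-off `m`: canteen iff arriving strictly before `m`. -/
def cutoff (m : ℤ) : ℤ → Act := fun k => if k < m then c else o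

/-- The all-office strategy. -/
def allOffice : ℤ → Act := fun _ => o

/-!
A cut-off profile miscoordinates on an arrival pair exactly when the pair straddles the
cut-off, and the arrival pairs are pairs of adjacent times, so the only candidates are
`(m - 1, m)` and `(m, m - 1)`. Both lie in `T` when `kmin < m ≤ kmax`, and since `m - 1`
and `m` have different parities exactly one of them lies in `T1`.
-/

lemma mem_T_iff {kmin kmax : ℤ} {t : ℤ × ℤ} :
    t ∈ T kmin kmax ↔
      (kmin ≤ t.1 ∧ t.1 < kmax ∧ t.2 = t.1 + 1) ∨ (kmin < t.1 ∧ t.1 ≤ kmax ∧ t.2 = t.1 - 1) := by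
  obtain ⟨a, b⟩ := t
  simp only [T, Finset.mem_union, Finset.mem_image, Finset.mem_Icc, Prod.mk.injEq]
  constructor
  · rintro (⟨k, hk, rfl, rfl⟩ | ⟨k, hk, rfl, rfl⟩) <;> omega
  · rintro (⟨ha, ha', rfl⟩ | ⟨ha, ha', rfl⟩)
    · exact Or.inl ⟨a, by omega, rfl, rfl⟩
    · exact Or.inr ⟨a, by omega, rfl, rfl⟩

lemma cutoff_ne_cutoff_iff {m a b : ℤ} :
    cutoff m a ≠ cutoff m b ↔ (a < m ∧ m ≤ b) ∨ (b < m ∧ m ≤ a) := by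
  unfold cutoff
  split_ifs <;> simp <;> omega

lemma cutoff_ne_cutoff_iff_of_adjacent {m a b : ℤ} (hab : b = a + 1 ∨ b = a - 1) :
    cutoff m a ≠ cutoff m b ↔ (a = m - 1 ∧ b = m) ∨ (a = m ∧ b = m - 1) := by
  rw [cutoff_ne_cutoff_iff]
  omega

def straddlingPair (kmin m : ℤ) : ℤ × ℤ :=
  if (m - 1) % 2 = kmin % 2 then (m - 1, m) else (m, m - 1)

lemma filter_T1_cutoff_ne_eq_singleton {kmin kmax m : ℤ} (hm1 : kmin < m) (hm2 : m ≤ kmax) :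
    (T1 kmin kmax).filter (fun t => cutoff m t.1 ≠ cutoff m t.2) =
      {straddlingPair kmin m} := by
  ext ⟨a, b⟩
  simp only [T1, Finset.mem_filter, mem_T_iff, Finset.mem_singleton, straddlingPair]
  constructor
  · rintro ⟨⟨hT, hpar⟩, hne⟩
    rw [cutoff_ne_cutoff_iff_of_adjacent (by omega)] at hne
    split_ifs <;> simp only [Prod.mk.injEq] <;> omega
  · intro h
    split_ifs at h <;> simp only [Prod.mk.injEq] at h <;>
      refine ⟨⟨by omega, by omega⟩, (cutoff_ne_cutoff_iff_of_adjacent (by omega)).2 (by omega)⟩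

theorem stmt_8_general (kmin kmax : ℤ)
    (m : ℤ) (hm1 : kmin < m) (hm2 : m ≤ kmax) :
    ((T1 kmin kmax).filter (fun t => cutoff m t.1 ≠ cutoff m t.2)).card = 1 ∧
    (∀ t ∈ (T1 kmin kmax).filter (fun t => cutoff m t.1 ≠ cutoff m t.2),
      (t.1 = m - 1 ∧ t.2 = m) ∨ (t.1 = m ∧ t.2 = m - 1)) := by
  rw [filter_T1_cutoff_ne_eq_singleton hm1 hm2]
  refine ⟨Finset.card_singleton _, fun t ht => ?_⟩
  rw [Finset.mem_singleton.1 ht, straddlingPair]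
  split_ifs <;> simp

/-- For `kmin < m ≤ kmax`, the cut-off profile with cut-off `m`
miscoordinates on exactly one arrival pair of `T1`, namely the unique pair in `T1`
whose two coordinates are `m - 1` and `m`. -/
theorem stmt_8 (kmin kmax N : ℤ) (h1 : kmin < N) (h2 : N ≤ kmax)
    (m : ℤ) (hm1 : kmin < m) (hm2 : m ≤ kmax) :
    ((T1 kmin kmax).filter (fun t => cutoff m t.1 ≠ cutoff m t.2)).card = 1 ∧
    (∀ t ∈ (T1 kmin kmax).filter (fun t => cutoff m t.1 ≠ cutoff m t.2),
      (t.1 = m - 1 ∧ t.2 = m) ∨ (t.1 = m ∧ t.2 = m - 1)) :=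
  stmt_8_general kmin kmax m hm1 hm2
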